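/- arXiv:1507.00295 — 3 statements merged into one kernel-verified Lean document; each statement's English description precedes it below -/
import Mathlib

section
/- Let d ≡ 1 (mod 4) be a positive square-free integer and let ε_d = x + y√d (with x, y ∈ ℤ, x, y > 0) be the fundamental unit of ℚ(√d), and assume its norm is 1, i.e. x² − d·y² = 1 with (x, y) the fundamental solution. Then: (1) neither x + 1 nor x − 1 is a square in ℕ (equivalently, 2ε_d is not a square in ℚ(√d)); and (2) for every prime p dividing d, neither p(x + 1) nor p(x − 1) is a square in ℕ. -/
/-!
From `x² = d y² + 1` with `d ≡ 1 (mod 4)` one gets `x` odd and `(x + 1)(x - 1) = d y²` with `d`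
odd, so `v₂(x + 1) + v₂(x - 1) = 2 v₂(y)` is even. One of `x ± 1` is `≡ 2 (mod 4)` and has
`v₂ = 1`, hence both `v₂(x ± 1)` are odd, and multiplying by an odd prime `p ∣ d` does not change
that; a square has even valuations. If `2ε_d = (u + v√d)²`, comparing coefficients gives
`u² + d v² = 2x` and `uv = y`, so `(u² - d v²)² = 4x² - 4d y² = 4` and `u² = x ± 1`.
-/

noncomputable section

/-- `(x, y)` is the fundamental (minimal) positive solution of the Pell equation
`X² - d Y² = 1`, i.e. the fundamental unit of `ℚ(√d)` is `x + y√d` and has norm `1`. -/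
def IsFundPell (d x y : ℕ) : Prop :=
  0 < x ∧ 0 < y ∧ x ^ 2 = d * y ^ 2 + 1 ∧
    ∀ x' y' : ℕ, 0 < x' → 0 < y' → x' ^ 2 = d * y' ^ 2 + 1 → x ≤ x'

end

lemma padicValNat_two_eq_one_of_mod_four_eq_two {n : ℕ} (h : n % 4 = 2) :
    padicValNat 2 n = 1 := by
  obtain ⟨m, rfl⟩ : ∃ m, n = 2 * m := ⟨n / 2, by omega⟩
  rw [padicValNat.mul (by omega) (by omega), padicValNat.self (by norm_num),
    padicValNat.eq_zero_of_not_dvd (by omega)]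

lemma even_padicValNat_of_isSquare {p n : ℕ} [Fact p.Prime] (h : IsSquare n) :
    Even (padicValNat p n) := by
  obtain ⟨a, rfl⟩ := h
  rcases eq_or_ne a 0 with rfl | ha
  · simp
  · exact ⟨_, padicValNat.mul ha ha⟩

lemma not_isSquare_mul_of_odd_padicValNat {p k n : ℕ} [Fact p.Prime] (hk : ¬ p ∣ k)
    (hv : Odd (padicValNat p n)) : ¬ IsSquare (k * n) := by
  intro h
  have hk0 : k ≠ 0 := by rintro rfl; exact hk (dvd_zero p)
  have hn0 : n ≠ 0 := by rintro rfl; simp at hv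
  have hkn : padicValNat p (k * n) = padicValNat p n := by
    rw [padicValNat.mul hk0 hn0, padicValNat.eq_zero_of_not_dvd hk, zero_add]
  exact Nat.not_even_iff_odd.mpr hv (hkn ▸ even_padicValNat_of_isSquare h)

lemma Irrational.eq_zero_of_ratCast_add_ratCast_mul_eq_zero {r : ℝ} (hr : Irrational r)
    {a b : ℚ} (h : (a : ℝ) + b * r = 0) : a = 0 ∧ b = 0 := by
  have hb : b = 0 := by
    by_contra hb
    exact (hr.ratCast_mul hb).ratCast_add a |>.ne_rat 0 (by simpa using h)
  subst hb
  exact ⟨by simpa using h, rfl⟩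

section Pell

variable {d x y : ℕ}

lemma not_isSquare_of_sq_eq_mul_sq_add_one (hd : d ≠ 0) (hxy : x ^ 2 = d * y ^ 2 + 1)
    (hy : 0 < y) : ¬ IsSquare d := by
  rintro ⟨s, rfl⟩
  have hsy : 0 < s * y := Nat.mul_pos (Nat.pos_of_ne_zero (by rintro rfl; simp at hd)) hy
  have hlt : s * y < x := by nlinarith
  nlinarith

lemma odd_of_sq_eq_mul_sq_add_one (hd : d % 4 = 1) (hxy : x ^ 2 = d * y ^ 2 + 1) : Odd x := by
  have hxy4 : (x : ZMod 4) ^ 2 = (y : ZMod 4) ^ 2 + 1 := by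
    have h := congrArg (Nat.cast (R := ZMod 4)) hxy
    push_cast at h
    rwa [← ZMod.natCast_mod d 4, hd, Nat.cast_one, one_mul] at h
  have key : ∀ a b : ZMod 4, a ^ 2 = b ^ 2 + 1 → a.val % 2 = 1 := by decide
  have := key _ _ hxy4
  rw [ZMod.val_natCast] at this
  exact Nat.odd_iff.mpr (by omega)

lemma add_one_mul_sub_one_eq (hxy : x ^ 2 = d * y ^ 2 + 1) : (x + 1) * (x - 1) = d * y ^ 2 := by
  have hx : 1 ≤ x := by nlinarith
  zify [hx] at hxy ⊢
  linear_combination hxy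

lemma odd_padicValNat_two_add_one_and_sub_one (hd : d % 4 = 1) (hxy : x ^ 2 = d * y ^ 2 + 1)
    (hy : 0 < y) : Odd (padicValNat 2 (x + 1)) ∧ Odd (padicValNat 2 (x - 1)) := by
  have hx := Nat.odd_iff.mp (odd_of_sq_eq_mul_sq_add_one hd hxy)
  have hx3 : 3 ≤ x := by
    by_contra hlt
    obtain rfl : x = 1 := by omega
    have : 0 < d * y ^ 2 := Nat.mul_pos (by omega) (by positivity)
    omega
  have hsum : padicValNat 2 (x + 1) + padicValNat 2 (x - 1) = 2 * padicValNat 2 y := by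
    rw [← padicValNat.mul (by omega) (by omega), add_one_mul_sub_one_eq hxy,
      padicValNat.mul (by omega) (by positivity), padicValNat.pow y 2,
      padicValNat.eq_zero_of_not_dvd (by omega), zero_add]
  simp only [Nat.odd_iff]
  rcases (by omega : (x + 1) % 4 = 2 ∨ (x - 1) % 4 = 2) with h | h <;>
    have := padicValNat_two_eq_one_of_mod_four_eq_two h <;> omega

lemma isSquare_add_one_or_sub_one_of_sq_eq_two_mul (hd : d ≠ 0)
    (hxy : x ^ 2 = d * y ^ 2 + 1) (hy : 0 < y) {u v : ℚ}
    (h : ((u : ℝ) + (v : ℝ) * √d) ^ 2 = 2 * ((x : ℝ) + (y : ℝ) * √d)) :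
    IsSquare (x + 1) ∨ IsSquare (x - 1) := by
  have hirr : Irrational √d :=
    irrational_sqrt_natCast_iff.mpr (not_isSquare_of_sq_eq_mul_sq_add_one hd hxy hy)
  have hs : √(d : ℝ) ^ 2 = d := Real.sq_sqrt (Nat.cast_nonneg d)
  obtain ⟨hnorm, htrace⟩ := hirr.eq_zero_of_ratCast_add_ratCast_mul_eq_zero
    (a := u ^ 2 + d * v ^ 2 - 2 * x) (b := 2 * u * v - 2 * y)
    (by push_cast; linear_combination h - (v : ℝ) ^ 2 * hs)
  have hxyq : (x : ℚ) ^ 2 = d * y ^ 2 + 1 := by exact_mod_cast hxy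
  have h4 : (u ^ 2 - x - 1) * (u ^ 2 - x + 1) = 0 := by
    linear_combination u ^ 2 * hnorm - (d : ℚ) * (u * v + y) * htrace / 2 + hxyq
  have hx : 1 ≤ x := by nlinarith
  rcases mul_eq_zero.mp h4 with h | h
  · left
    exact Rat.isSquare_natCast_iff.mp ⟨u, by push_cast; linear_combination -h⟩
  · right
    exact Rat.isSquare_natCast_iff.mp ⟨u, by push_cast [hx]; linear_combination -h⟩

end Pell

theorem statement0_general (d : ℕ) (hd4 : d % 4 = 1)
    (x y : ℕ) (hxy : IsFundPell d x y) :
    (¬ IsSquare (x + 1) ∧ ¬ IsSquare (x - 1) ∧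
      ¬ ∃ u v : ℚ, ((u : ℝ) + (v : ℝ) * Real.sqrt d) ^ 2
          = 2 * ((x : ℝ) + (y : ℝ) * Real.sqrt d)) ∧
    ∀ p : ℕ, p.Prime → p ∣ d →
      ¬ IsSquare (p * (x + 1)) ∧ ¬ IsSquare (p * (x - 1)) := by
  obtain ⟨-, hy, hxy, -⟩ := hxy
  obtain ⟨hplus, hminus⟩ := odd_padicValNat_two_add_one_and_sub_one hd4 hxy hy
  have hA : ¬ IsSquare (x + 1) := fun h ↦ Nat.not_even_iff_odd.mpr hplus
    (even_padicValNat_of_isSquare h)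
  have hB : ¬ IsSquare (x - 1) := fun h ↦ Nat.not_even_iff_odd.mpr hminus
    (even_padicValNat_of_isSquare h)
  refine ⟨⟨hA, hB, fun ⟨u, v, h⟩ ↦
    (isSquare_add_one_or_sub_one_of_sq_eq_two_mul (by omega) hxy hy h).elim hA hB⟩,
    fun p _ hpd ↦ ?_⟩
  have h2p : ¬ 2 ∣ p := fun h ↦ by have := Nat.mod_eq_zero_of_dvd (h.trans hpd); omega
  exact ⟨not_isSquare_mul_of_odd_padicValNat h2p hplus,
    not_isSquare_mul_of_odd_padicValNat h2p hminus⟩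

theorem statement0 (d : ℕ) (hd1 : 1 < d) (hdsf : Squarefree d) (hd4 : d % 4 = 1)
    (x y : ℕ) (hxy : IsFundPell d x y) :
    (¬ IsSquare (x + 1) ∧ ¬ IsSquare (x - 1) ∧
      ¬ ∃ u v : ℚ, ((u : ℝ) + (v : ℝ) * Real.sqrt d) ^ 2
          = 2 * ((x : ℝ) + (y : ℝ) * Real.sqrt d)) ∧
    ∀ p : ℕ, p.Prime → p ∣ d →
      ¬ IsSquare (p * (x + 1)) ∧ ¬ IsSquare (p * (x - 1)) :=
  statement0_general d hd4 x y hxy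
end

section
/- Let p₁ ≡ p₂ ≡ −q ≡ 1 (mod 4) be distinct primes and let ε_{p₁p₂q} = x + y√(p₁p₂q) be the fundamental unit of ℚ(√(p₁p₂q)) (of norm 1, with x, y positive integers). Then: (1) if x + 1 or x − 1 is a square in ℕ, then 2ε_{p₁p₂q} is a square in ℚ(√(p₁p₂q)) but ε_{p₁p₂q} is not a square in ℚ(√p₁, √(p₂q)); (2) if p₁(x + 1) or p₁(x − 1) is a square in ℕ, then 2ε_{p₁p₂q} is a square in the field ℚ(√p₁, √(p₂q)) but ε_{p₁p₂q} is not; (3) if 2p₁(x + 1) or 2p₁(x − 1) is a square in ℕ, then ε_{p₁p₂q} is a square in ℚ(√p₁, √(p₂q)). -/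
noncomputable section

/-- The field `ℚ(√p₁, √(p₂q))` realized inside `ℝ`. -/
def Lfld2 (p₁ p₂ q : ℕ) : IntermediateField ℚ ℝ :=
  IntermediateField.adjoin ℚ {Real.sqrt p₁, Real.sqrt (p₂ * q)}

open IntermediateField SubfieldClass

theorem Nat.Prime.not_isSquare_mul_of_not_dvd {p m : ℕ} (hp : p.Prime) (hm : ¬p ∣ m) :
    ¬IsSquare (p * m) := by
  rintro ⟨k, hk⟩
  obtain ⟨j, rfl⟩ : p ∣ k := (hp.dvd_mul.mp (hk ▸ dvd_mul_right p m)).elim id id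
  exact hm ⟨j * j, Nat.eq_of_mul_eq_mul_left hp.pos (by rw [hk]; ring)⟩

theorem sq_add_div_mul_eq_two_mul {K : Type*} [Field K] {k m x y d w : K} (hm : m ≠ 0)
    (hmk : m ^ 2 = k * (x + 1) ∨ m ^ 2 = k * (x - 1)) (hpell : x ^ 2 = d * y ^ 2 + 1)
    (hw : w ^ 2 = d) :
    (m + k * y / m * w) ^ 2 = 2 * k * (x + y * w) := by
  field_simp
  rcases hmk with h | h
  · linear_combination (k ^ 2 * y ^ 2) * hw + (m ^ 2 - k * x + k) * h - k ^ 2 * hpell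
  · linear_combination (k ^ 2 * y ^ 2) * hw + (m ^ 2 - k * x - k) * h - k ^ 2 * hpell

theorem exists_rat_sq_eq_two_mul {d : ℝ} (hd : 0 ≤ d) {x y k : ℕ} (hx : 2 ≤ x) (hk : 0 < k)
    (hpell : (x : ℝ) ^ 2 = d * y ^ 2 + 1)
    (h : IsSquare (k * (x + 1)) ∨ IsSquare (k * (x - 1))) :
    ∃ u v : ℚ, ((u : ℝ) + v * √d) ^ 2 = 2 * k * (x + y * √d) := by
  obtain ⟨m, hm, hmk⟩ : ∃ m : ℕ, m ≠ 0 ∧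
      ((m : ℝ) ^ 2 = k * (x + 1) ∨ (m : ℝ) ^ 2 = k * (x - 1)) := by
    rcases h with ⟨m, hm⟩ | ⟨m, hm⟩
    · refine ⟨m, ?_, Or.inl (by exact_mod_cast (sq m).trans hm.symm)⟩
      rintro rfl
      simp_all
    · refine ⟨m, ?_, Or.inr ?_⟩
      · rintro rfl
        simp only [mul_zero, mul_eq_zero] at hm
        omega
      · rw [← Nat.cast_one, ← Nat.cast_sub (by omega)]
        exact_mod_cast (sq m).trans hm.symm
  refine ⟨m, k * y / m, ?_⟩
  push_cast
  exact sq_add_div_mul_eq_two_mul (by exact_mod_cast hm) hmk hpell (Real.sq_sqrt hd)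

theorem SubfieldClass.not_exists_sq_eq_of_sq_eq_mul {K S : Type*} [Field K] [SetLike S K]
    [SubfieldClass S K] {L : S} {c ε β : K} (hε : ε ≠ 0) (hc : ∀ γ ∈ L, γ ^ 2 ≠ c)
    (hβ : β ∈ L) (hβε : β ^ 2 = c * ε) :
    ¬∃ α ∈ L, α ^ 2 = ε := by
  rintro ⟨α, hα, rfl⟩
  have hα0 : α ≠ 0 := by rintro rfl; simp at hε
  exact hc (β / α) (div_mem hβ hα) (by rw [div_pow, hβε]; field_simp)

namespace IntermediateField

variable {F E : Type*} [Field F] [Field E] [Algebra F E] {s : E} {P : F}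

theorem exists_eq_add_mul_of_mem_adjoin_simple (hs : s ^ 2 = algebraMap F E P) {β : E}
    (hβ : β ∈ F⟮s⟯) : ∃ a b : F, β = algebraMap F E a + algebraMap F E b * s := by
  have hint : IsIntegral F s :=
    ⟨Polynomial.X ^ 2 - Polynomial.C P, Polynomial.monic_X_pow_sub_C P two_ne_zero, by simp [hs]⟩
  rw [← mem_toSubalgebra, adjoin_simple_toSubalgebra_of_isAlgebraic hint.isAlgebraic] at hβ
  induction hβ using Algebra.adjoin_induction with
  | mem x hx => exact ⟨0, 1, by simp [Set.mem_singleton_iff.mp hx]⟩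
  | algebraMap r => exact ⟨r, 0, by simp⟩
  | add _ _ _ _ h₁ h₂ =>
    obtain ⟨a, b, rfl⟩ := h₁
    obtain ⟨a', b', rfl⟩ := h₂
    exact ⟨a + a', b + b', by simp only [map_add]; ring⟩
  | mul _ _ _ _ h₁ h₂ =>
    obtain ⟨a, b, rfl⟩ := h₁
    obtain ⟨a', b', rfl⟩ := h₂
    refine ⟨a * a' + P * b * b', a * b' + b * a', ?_⟩
    simp only [map_add, map_mul]
    linear_combination (algebraMap F E b * algebraMap F E b') * hs

theorem sq_ne_algebraMap_of_mem_adjoin_simple [NeZero (2 : F)] (hs : s ^ 2 = algebraMap F E P)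
    (hP : ¬IsSquare P) {r : F} (hr : ¬IsSquare r) (hPr : ¬IsSquare (P * r)) {β : E}
    (hβ : β ∈ F⟮s⟯) : β ^ 2 ≠ algebraMap F E r := by
  intro hβr
  obtain ⟨a, b, rfl⟩ := exists_eq_add_mul_of_mem_adjoin_simple hs hβ
  have hlin : algebraMap F E (2 * a * b) * s = algebraMap F E (r - a ^ 2 - P * b ^ 2) := by
    simp only [map_mul, map_sub, map_pow, map_ofNat]
    linear_combination hβr - algebraMap F E b ^ 2 * hs
  have hab : a * b = 0 := by
    by_contra hab
    have h2ab : 2 * a * b ≠ 0 := by rw [mul_assoc]; exact mul_ne_zero two_ne_zero hab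
    have hsF : s = algebraMap F E ((r - a ^ 2 - P * b ^ 2) / (2 * a * b)) := by
      rw [map_div₀, ← hlin, mul_div_cancel_left₀ _ ((map_ne_zero _).mpr h2ab)]
    exact hP ⟨_, (algebraMap F E).injective (by rw [← hs, hsF, map_mul, sq])⟩
  rcases mul_eq_zero.mp hab with rfl | rfl
  · refine hPr ⟨P * b, (algebraMap F E).injective ?_⟩
    simp only [map_zero, zero_add, mul_pow, hs] at hβr
    simp only [map_mul, ← hβr]
    ring
  · exact hr ⟨a, (algebraMap F E).injective (by simpa [sq] using hβr.symm)⟩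

end IntermediateField

theorem not_isSquare_natCast_adjoin_sqrt {p r : ℕ} (hp : ¬IsSquare p) (hr : ¬IsSquare r)
    (hpr : ¬IsSquare (p * r)) : ¬IsSquare (r : ℚ⟮√(p : ℝ)⟯) := by
  rintro ⟨c, hc⟩
  refine sq_ne_algebraMap_of_mem_adjoin_simple (P := (p : ℚ)) (r := r) ?_
    (Rat.isSquare_natCast_iff.not.mpr hp) (Rat.isSquare_natCast_iff.not.mpr hr)
    (by rwa [← Nat.cast_mul, Rat.isSquare_natCast_iff]) c.2 ?_
  · simp [Real.sq_sqrt]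
  · simpa [sq] using (congrArg (algebraMap _ ℝ) hc).symm

theorem sq_ne_natCast_of_mem_adjoin_sqrt_sqrt {p n r : ℕ} (hp : ¬IsSquare p)
    (hn : ¬IsSquare n) (hpn : ¬IsSquare (p * n)) (hr : ¬IsSquare r) (hpr : ¬IsSquare (p * r))
    (hnr : ¬IsSquare (n * r)) (hpnr : ¬IsSquare (p * (n * r))) {γ : ℝ}
    (hγ : γ ∈ ℚ⟮√(p : ℝ), √(n : ℝ)⟯) : γ ^ 2 ≠ r := by
  rw [← Set.singleton_union, ← adjoin_adjoin_left, mem_restrictScalars] at hγ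
  have key := sq_ne_algebraMap_of_mem_adjoin_simple (P := (n : ℚ⟮√(p : ℝ)⟯)) (r := r)
    (by simp [Real.sq_sqrt]) (not_isSquare_natCast_adjoin_sqrt hp hn hpn)
    (not_isSquare_natCast_adjoin_sqrt hp hr hpr)
    (by rw [← Nat.cast_mul]; exact not_isSquare_natCast_adjoin_sqrt hp hnr hpnr) hγ
  simpa using key

theorem sq_ne_two_of_mem_Lfld2 {p₁ p₂ q : ℕ} (hp₁ : p₁.Prime) (hp₂ : p₂.Prime) (hq : q.Prime)
    (hne₁₂ : p₁ ≠ p₂) (hne₁q : p₁ ≠ q) (hne₂q : p₂ ≠ q) (hodd : Odd (p₁ * p₂ * q))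
    {γ : ℝ} (hγ : γ ∈ Lfld2 p₁ p₂ q) : γ ^ 2 ≠ 2 := by
  have hodd₁ : Odd p₁ := (Nat.odd_mul.mp (Nat.odd_mul.mp hodd).1).1
  have hodd₂q : Odd (p₂ * q) := by rwa [mul_assoc, Nat.odd_mul, and_iff_right hodd₁] at hodd
  have not_isSquare_mul_two {m : ℕ} (hm : Odd m) : ¬IsSquare (m * 2) := by
    rw [mul_comm]; exact Nat.prime_two.not_isSquare_mul_of_not_dvd hm.not_two_dvd_nat
  have h₂q : ¬IsSquare (p₂ * q) :=
    hp₂.not_isSquare_mul_of_not_dvd fun h ↦ hne₂q ((Nat.prime_dvd_prime_iff_eq hp₂ hq).mp h)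
  have h₁₂q : ¬IsSquare (p₁ * (p₂ * q)) := by
    refine hp₁.not_isSquare_mul_of_not_dvd fun h ↦ ?_
    rcases hp₁.dvd_mul.mp h with h | h
    · exact hne₁₂ ((Nat.prime_dvd_prime_iff_eq hp₁ hp₂).mp h)
    · exact hne₁q ((Nat.prime_dvd_prime_iff_eq hp₁ hq).mp h)
  have hL : Lfld2 p₁ p₂ q = ℚ⟮√(p₁ : ℝ), √((p₂ * q : ℕ) : ℝ)⟯ := by rw [Nat.cast_mul]; rfl
  rw [hL] at hγ
  exact_mod_cast sq_ne_natCast_of_mem_adjoin_sqrt_sqrt (r := 2) hp₁.prime.not_isSquare h₂q h₁₂q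
    Nat.prime_two.prime.not_isSquare (not_isSquare_mul_two hodd₁) (not_isSquare_mul_two hodd₂q)
    (by rw [← mul_assoc]; exact not_isSquare_mul_two (by rwa [← mul_assoc])) hγ

theorem sqrt_mem_Lfld2 (p₁ p₂ q : ℕ) : √(p₁ : ℝ) ∈ Lfld2 p₁ p₂ q :=
  subset_adjoin _ _ (by simp)

theorem rat_add_rat_mul_sqrt_mem_Lfld2 (p₁ p₂ q : ℕ) (u v : ℚ) :
    (u : ℝ) + v * √((p₁ : ℝ) * p₂ * q) ∈ Lfld2 p₁ p₂ q := by
  rw [mul_assoc, Real.sqrt_mul (Nat.cast_nonneg _)]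
  exact add_mem (ratCast_mem _ u)
    (mul_mem (ratCast_mem _ v) (mul_mem (sqrt_mem_Lfld2 p₁ p₂ q) (subset_adjoin _ _ (by simp))))

theorem exists_mem_Lfld2_sq_eq_two_mul {p₁ p₂ q x y k : ℕ} (hx : 2 ≤ x)
    (hpell : (x : ℝ) ^ 2 = p₁ * p₂ * q * y ^ 2 + 1) (hk : 0 < k)
    (h : IsSquare (k * (x + 1)) ∨ IsSquare (k * (x - 1))) :
    ∃ β ∈ Lfld2 p₁ p₂ q, β ^ 2 = 2 * k * (x + y * √(p₁ * p₂ * q)) :=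
  let ⟨u, v, huv⟩ := exists_rat_sq_eq_two_mul (by positivity) hx hk hpell h
  ⟨_, rat_add_rat_mul_sqrt_mem_Lfld2 p₁ p₂ q u v, huv⟩

theorem statement2 (p₁ p₂ q : ℕ) (hp₁ : p₁.Prime) (hp₂ : p₂.Prime) (hq : q.Prime)
    (hne₁₂ : p₁ ≠ p₂) (hne₁q : p₁ ≠ q) (hne₂q : p₂ ≠ q)
    (h₁ : p₁ % 4 = 1) (h₂ : p₂ % 4 = 1) (h₃ : q % 4 = 3)
    (x y : ℕ) (hxy : IsFundPell (p₁ * p₂ * q) x y) :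
    ((IsSquare (x + 1) ∨ IsSquare (x - 1)) →
      (∃ u v : ℚ, ((u : ℝ) + (v : ℝ) * Real.sqrt (p₁ * p₂ * q)) ^ 2
          = 2 * ((x : ℝ) + (y : ℝ) * Real.sqrt (p₁ * p₂ * q))) ∧
      ¬ ∃ α ∈ Lfld2 p₁ p₂ q,
        α ^ 2 = (x : ℝ) + (y : ℝ) * Real.sqrt (p₁ * p₂ * q)) ∧
    ((IsSquare (p₁ * (x + 1)) ∨ IsSquare (p₁ * (x - 1))) →
      (∃ α ∈ Lfld2 p₁ p₂ q,
        α ^ 2 = 2 * ((x : ℝ) + (y : ℝ) * Real.sqrt (p₁ * p₂ * q))) ∧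
      ¬ ∃ α ∈ Lfld2 p₁ p₂ q,
        α ^ 2 = (x : ℝ) + (y : ℝ) * Real.sqrt (p₁ * p₂ * q)) ∧
    ((IsSquare (2 * p₁ * (x + 1)) ∨ IsSquare (2 * p₁ * (x - 1))) →
      ∃ α ∈ Lfld2 p₁ p₂ q,
        α ^ 2 = (x : ℝ) + (y : ℝ) * Real.sqrt (p₁ * p₂ * q)) := by
  obtain ⟨-, hy, hpell, -⟩ := hxy
  have hx : 2 ≤ x := by
    have := Nat.mul_pos (Nat.mul_pos hp₁.pos hp₂.pos) hq.pos
    nlinarith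
  have hpellR : (x : ℝ) ^ 2 = p₁ * p₂ * q * y ^ 2 + 1 := by exact_mod_cast hpell
  have hε : (x : ℝ) + y * √(p₁ * p₂ * q) ≠ 0 := by positivity
  have hodd : Odd (p₁ * p₂ * q) :=
    ((Nat.odd_iff.mpr (by omega)).mul (Nat.odd_iff.mpr (by omega))).mul (Nat.odd_iff.mpr (by omega))
  have htwo : ∀ γ ∈ Lfld2 p₁ p₂ q, γ ^ 2 ≠ 2 := fun γ ↦
    sq_ne_two_of_mem_Lfld2 hp₁ hp₂ hq hne₁₂ hne₁q hne₂q hodd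
  have hs2 : √(p₁ : ℝ) ^ 2 = p₁ := Real.sq_sqrt (Nat.cast_nonneg _)
  have hp₁R : (p₁ : ℝ) ≠ 0 := by exact_mod_cast hp₁.ne_zero
  have part₂ (h : IsSquare (p₁ * (x + 1)) ∨ IsSquare (p₁ * (x - 1))) :
      ∃ α ∈ Lfld2 p₁ p₂ q, α ^ 2 = 2 * (x + y * √(p₁ * p₂ * q)) := by
    obtain ⟨β, hβ, hβ2⟩ := exists_mem_Lfld2_sq_eq_two_mul hx hpellR hp₁.pos h
    refine ⟨β / √(p₁ : ℝ), div_mem hβ (sqrt_mem_Lfld2 p₁ p₂ q), ?_⟩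
    rw [div_pow, hβ2, hs2]
    field_simp
  refine ⟨fun h ↦ ?_, fun h ↦ ⟨part₂ h, ?_⟩, fun h ↦ ?_⟩
  · obtain ⟨u, v, huv⟩ : ∃ u v : ℚ,
        ((u : ℝ) + v * √(p₁ * p₂ * q)) ^ 2 = 2 * (x + y * √(p₁ * p₂ * q)) := by
      simpa using exists_rat_sq_eq_two_mul (by positivity) hx one_pos hpellR (by simpa using h)
    exact ⟨⟨u, v, huv⟩, not_exists_sq_eq_of_sq_eq_mul hε htwo
      (rat_add_rat_mul_sqrt_mem_Lfld2 p₁ p₂ q u v) huv⟩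
  · obtain ⟨α, hα, hα2⟩ := part₂ h
    exact not_exists_sq_eq_of_sq_eq_mul hε htwo hα hα2
  · obtain ⟨β, hβ, hβ2⟩ := exists_mem_Lfld2_sq_eq_two_mul hx hpellR (Nat.mul_pos two_pos hp₁.pos) h
    refine ⟨β / (2 * √(p₁ : ℝ)),
      div_mem hβ (mul_mem (ofNat_mem _ 2) (sqrt_mem_Lfld2 p₁ p₂ q)), ?_⟩
    rw [div_pow, hβ2, mul_pow, hs2]
    push_cast
    field_simp

end
end

section
/- Let p₁ ≡ p₂ ≡ −q ≡ 1 (mod 4) be distinct primes with p₁ ≡ 5 (mod 8) or p₂ ≡ 5 (mod 8), and let ε_{p₁p₂q} = x + y√(p₁p₂q) be the fundamental unit of ℚ(√(p₁p₂q)) (of norm 1, x, y positive integers). Then neither x + 1 nor x − 1 is a square in ℕ. -/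
lemma val_aux (p d m n y : ℕ) (hp : p.Prime) (hfac : d.factorization p = 1)
    (hm : m ≠ 0) (hn : n ≠ 0) (hy : y ≠ 0) (hd : d ≠ 0)
    (heq : m * n = d * y ^ 2) (hs : IsSquare m) (hpn : ¬ p ∣ n) : False := by
  obtain ⟨s, rfl⟩ := hs
  have hs0 : s ≠ 0 := by rintro rfl; simp at hm
  have e := congrArg (fun f : ℕ →₀ ℕ => f p) (congrArg Nat.factorization heq)
  simp only [Nat.factorization_mul (mul_ne_zero hs0 hs0) hn,
    Nat.factorization_mul hs0 hs0, Nat.factorization_mul hd (pow_ne_zero 2 hy),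
    Nat.factorization_pow, Finsupp.add_apply, Finsupp.smul_apply, smul_eq_mul,
    Nat.factorization_eq_zero_of_not_dvd hpn, hfac] at e
  omega

lemma main_aux (d p x y : ℕ) (hp : p.Prime) (hp8 : p % 8 = 5)
    (hfac : d.factorization p = 1) (hd : d ≠ 0)
    (hx : 2 ≤ x) (hy : y ≠ 0) (heq : (x + 1) * (x - 1) = d * y ^ 2) :
    ¬ IsSquare (x + 1) ∧ ¬ IsSquare (x - 1) := by
  haveI : Fact p.Prime := ⟨hp⟩
  have hp2 : p ≠ 2 := by omega
  have hpd : p ∣ d := Nat.dvd_of_factorization_pos (by omega)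
  have hpn : ¬ (p ∣ x + 1 ∧ p ∣ x - 1) := by
    rintro ⟨ha, hb⟩
    have h2 : p ∣ 2 := by
      have := Nat.dvd_sub ha hb
      have h3 : x + 1 - (x - 1) = 2 := by omega
      rwa [h3] at this
    have := Nat.le_of_dvd (by norm_num) h2
    have := hp.two_le
    omega
  have hdvdprod : p ∣ (x + 1) * (x - 1) := by
    rw [heq]; exact Dvd.dvd.mul_right hpd _
  constructor
  · rintro hs
    by_cases h1 : p ∣ x + 1
    · exact val_aux p d (x + 1) (x - 1) y hp hfac (by omega) (by omega) hy hd heq hs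
        (fun h2 => hpn ⟨h1, h2⟩)
    · have h2 : p ∣ x - 1 := (hp.dvd_mul.mp hdvdprod).resolve_left h1
      obtain ⟨s, hs⟩ := hs
      have hcast : ((x - 1 : ℕ) : ZMod p) = 0 := (ZMod.natCast_eq_zero_iff _ _).mpr h2
      have h2' : ((x + 1 : ℕ) : ZMod p) = 2 := by
        have hx1 : x - 1 + 2 = x + 1 := by omega
        calc ((x + 1 : ℕ) : ZMod p) = ((x - 1 + 2 : ℕ) : ZMod p) := by rw [hx1]
          _ = 2 := by push_cast [hcast]; ring
      have hsq : IsSquare (2 : ZMod p) := ⟨s, by rw [← h2', hs]; push_cast; ring⟩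
      rw [ZMod.exists_sq_eq_two_iff hp2] at hsq
      omega
  · rintro hs
    by_cases h1 : p ∣ x - 1
    · exact val_aux p d (x - 1) (x + 1) y hp hfac (by omega) (by omega) hy hd
        (by rw [← heq]; ring) hs (fun h2 => hpn ⟨h2, h1⟩)
    · have h2 : p ∣ x + 1 := (hp.dvd_mul.mp hdvdprod).resolve_right h1
      obtain ⟨s, hs⟩ := hs
      have hcast : ((x + 1 : ℕ) : ZMod p) = 0 := (ZMod.natCast_eq_zero_iff _ _).mpr h2
      have h2' : ((x - 1 : ℕ) : ZMod p) = -2 := by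
        have hx1 : x - 1 + 2 = x + 1 := by omega
        have : ((x - 1 + 2 : ℕ) : ZMod p) = 0 := by rw [hx1]; exact hcast
        push_cast at this
        linear_combination this
      have hsq : IsSquare (-2 : ZMod p) := ⟨s, by rw [← h2', hs]; push_cast; ring⟩
      rw [ZMod.exists_sq_eq_neg_two_iff hp2] at hsq
      omega

theorem statement7 (p₁ p₂ q : ℕ) (hp₁ : p₁.Prime) (hp₂ : p₂.Prime) (hq : q.Prime)
    (hne₁₂ : p₁ ≠ p₂) (hne₁q : p₁ ≠ q) (hne₂q : p₂ ≠ q)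
    (h₁ : p₁ % 4 = 1) (h₂ : p₂ % 4 = 1) (h₃ : q % 4 = 3)
    (h58 : p₁ % 8 = 5 ∨ p₂ % 8 = 5)
    (x y : ℕ) (hxy : IsFundPell (p₁ * p₂ * q) x y) :
    ¬ IsSquare (x + 1) ∧ ¬ IsSquare (x - 1) := by
  obtain ⟨hx0, hy0, hEq, -⟩ := hxy
  have hdpos : 0 < p₁ * p₂ * q * y ^ 2 :=
    Nat.mul_pos (Nat.mul_pos (Nat.mul_pos hp₁.pos hp₂.pos) hq.pos) (pow_pos hy0 2)
  have hd0 : p₁ * p₂ * q ≠ 0 := (Nat.mul_pos (Nat.mul_pos hp₁.pos hp₂.pos) hq.pos).ne'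
  have hx2 : 2 ≤ x := by
    rcases le_or_gt 2 x with h | h
    · exact h
    · exfalso
      have hx1 : x = 1 := by omega
      subst hx1
      simp at hEq
      omega
  have heq : (x + 1) * (x - 1) = p₁ * p₂ * q * y ^ 2 := by
    obtain ⟨n, rfl⟩ : ∃ n, x = n + 2 := ⟨x - 2, by omega⟩
    have h1 : n + 2 - 1 = n + 1 := by omega
    rw [show n + 2 + 1 = n + 3 from rfl, h1]
    nlinarith [hEq]
  rcases h58 with h58 | h58
  · have hfac : (p₁ * p₂ * q).factorization p₁ = 1 := by
      rw [Nat.factorization_mul (mul_ne_zero hp₁.pos.ne' hp₂.pos.ne') hq.pos.ne',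
        Nat.factorization_mul hp₁.pos.ne' hp₂.pos.ne', hp₁.factorization, hp₂.factorization,
        hq.factorization]
      simp [Finsupp.single_apply, hne₁₂.symm, hne₁q.symm]
    exact main_aux _ p₁ x y hp₁ h58 hfac hd0 hx2 hy0.ne' heq
  · have hfac : (p₁ * p₂ * q).factorization p₂ = 1 := by
      rw [Nat.factorization_mul (mul_ne_zero hp₁.pos.ne' hp₂.pos.ne') hq.pos.ne',
        Nat.factorization_mul hp₁.pos.ne' hp₂.pos.ne', hp₁.factorization, hp₂.factorization,
        hq.factorization]
      simp [Finsupp.single_apply, hne₁₂, hne₂q.symm]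
    exact main_aux _ p₂ x y hp₂ h58 hfac hd0 hx2 hy0.ne' heq
end
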